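/- arXiv:1809.05758 — 2 statements merged into one kernel-verified Lean document; each statement's English description precedes it below -/
import Mathlib

section
/- Let X₁,…,X_i be i.i.d. random points in ℝ^d with common density f that is essentially bounded, and let r > 0. Then the probability that the geometric graph on {X₁,…,X_i} with connectivity radius r (edges between points at distance < r) is connected is at most i^{i−2} · (r^d · ‖f‖_∞ · θ_d)^{i−1}, where θ_d is the volume of the unit ball in ℝ^d. -/
/-!
A connected geometric graph contains a spanning tree, encoded below by its parent map towards the
vertex `0`; by Prüfer's code there are at most `i ^ (i - 2)` such maps. For a fixed tree,
integrating out the positions of the leaves one at a time shows that all `i - 1` tree edges are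
shorter than `r` with probability at most `(sup_z μ (B(z, r))) ^ (i - 1)`, which is at most
`(r ^ d ‖f‖_∞ θ_d) ^ (i - 1)`; a union bound over the trees finishes the proof.
-/

open scoped Classical
open Metric MeasureTheory ProbabilityTheory

/-- The geometric graph on points `x : Fin i → ℝ^d` with connectivity radius `r`:
an edge between distinct indices `a b` whenever `dist (x a) (x b) < r`. -/
def geomGraph {d i : ℕ} (r : ℝ) (x : Fin i → EuclideanSpace ℝ (Fin d)) :
    SimpleGraph (Fin i) :=
  SimpleGraph.fromRel (fun a b => dist (x a) (x b) < r)

open Finset Function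
open scoped ENNReal

/-- `p` is the parent map of a tree on `ι` rooted at `root`. -/
def IsRootedTree {ι : Type*} (p : ι → ι) (root : ι) : Prop :=
  p root = root ∧ ∀ v, ∃ k, p^[k] v = root

section Leaves

variable {ι : Type*} {p : ι → ι} {t : Finset ι}

theorem Finset.Nonempty.exists_forall_ne_of_forall_exists_iterate_notMem (ht : t.Nonempty)
    (hexit : ∀ v ∈ t, ∃ k, p^[k] v ∉ t) : ∃ ℓ ∈ t, ∀ w ∈ t, p w ≠ ℓ := by
  classical
  -- a vertex of maximal exit time from `t` cannot be the parent of a vertex of `t`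
  obtain ⟨ℓ, hℓ, hmax⟩ :=
    t.exists_max_image (fun v => if h : ∃ k, p^[k] v ∉ t then Nat.find h else 0) ht
  refine ⟨ℓ, hℓ, fun w hw hwℓ => ?_⟩
  have hexit_lt : Nat.find (hexit ℓ hℓ) < Nat.find (hexit w hw) := by
    rw [Nat.lt_find_iff]
    rintro (_ | m) hm
    · simpa using hw
    · rw [iterate_succ_apply, hwℓ]
      exact Nat.find_min (hexit ℓ hℓ) (show m < _ by omega)
  have := hmax w hw
  simp only [dif_pos (hexit ℓ hℓ), dif_pos (hexit w hw)] at this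
  omega

end Leaves

section PruferCode

variable {ι : Type*} [LinearOrder ι] (root : ι) {p q : ι → ι} {s : Finset ι}

def pruferLeaves (p : ι → ι) (s : Finset ι) : Finset ι :=
  {v ∈ s.erase root | ∀ w ∈ s.erase root, p w ≠ v}

theorem pruferLeaves_subset (p : ι → ι) (s : Finset ι) :
    pruferLeaves root p s ⊆ s.erase root :=
  filter_subset _ _

/-- Prüfer's code, removing the largest leaf at each step. -/
def pruferCode (p : ι → ι) (s : Finset ι) : List ι :=
  if h : (pruferLeaves root p s).Nonempty then
    p ((pruferLeaves root p s).max' h) :: pruferCode p (s.erase ((pruferLeaves root p s).max' h))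
  else []
termination_by s.card
decreasing_by
  exact card_erase_lt_of_mem (mem_of_mem_erase (pruferLeaves_subset _ _ _ (max'_mem _ h)))

variable {root}

theorem pruferCode_eq_cons (h : (pruferLeaves root p s).Nonempty) :
    pruferCode root p s = p ((pruferLeaves root p s).max' h) ::
      pruferCode root p (s.erase ((pruferLeaves root p s).max' h)) := by
  rw [pruferCode, dif_pos h]

theorem IsRootedTree.pruferLeaves_nonempty (hp : IsRootedTree p root)
    (hs : (s.erase root).Nonempty) : (pruferLeaves root p s).Nonempty := by
  obtain ⟨ℓ, hℓ, hleaf⟩ := hs.exists_forall_ne_of_forall_exists_iterate_notMem fun v _ =>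
    (hp.2 v).imp fun _ hk => by rw [hk]; exact notMem_erase root s
  exact ⟨ℓ, mem_filter.mpr ⟨hℓ, hleaf⟩⟩

theorem IsRootedTree.coe_pruferCode (hp : IsRootedTree p root) (s : Finset ι) :
    (pruferCode root p s : Multiset ι) = (s.erase root).val.map p := by
  induction s using Finset.strongInduction with
  | H s ih =>
    by_cases hs : (s.erase root).Nonempty
    · have hl := hp.pruferLeaves_nonempty hs
      set ℓ := (pruferLeaves root p s).max' hl
      have hℓ : ℓ ∈ s.erase root := pruferLeaves_subset _ _ _ (max'_mem _ hl)
      rw [pruferCode_eq_cons hl, ← Multiset.cons_coe,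
        ih _ (erase_ssubset (mem_of_mem_erase hℓ)), ← Multiset.map_cons, erase_right_comm,
        ← Multiset.cons_erase (mem_val.mpr hℓ)]
      rfl
    · rw [pruferCode, dif_neg fun hl => hs (hl.mono (pruferLeaves_subset _ _ _)),
        not_nonempty_iff_eq_empty.mp hs]
      rfl

theorem IsRootedTree.mem_pruferCode (hp : IsRootedTree p root) {v : ι} :
    v ∈ pruferCode root p s ↔ ∃ w ∈ s.erase root, p w = v := by
  rw [← Multiset.mem_coe, hp.coe_pruferCode, Multiset.mem_map]
  rfl

theorem IsRootedTree.length_pruferCode (hp : IsRootedTree p root) :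
    (pruferCode root p s).length = #(s.erase root) := by
  rw [← Multiset.coe_card, hp.coe_pruferCode, Multiset.card_map]
  rfl

theorem IsRootedTree.pruferLeaves_eq (hp : IsRootedTree p root) :
    pruferLeaves root p s = {v ∈ s.erase root | v ∉ pruferCode root p s} := by
  ext v
  simp [pruferLeaves, hp.mem_pruferCode]

theorem IsRootedTree.getLast?_pruferCode (hp : IsRootedTree p root)
    (hps : ∀ w ∈ s, p w ∈ s) (hs : (s.erase root).Nonempty) :
    (pruferCode root p s).getLast? = some root := by
  induction s using Finset.strongInduction with
  | H s ih =>
    have hl := hp.pruferLeaves_nonempty hs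
    rw [pruferCode_eq_cons hl]
    set ℓ := (pruferLeaves root p s).max' hl
    have hℓ : ℓ ∈ pruferLeaves root p s := max'_mem _ hl
    have hℓs : ℓ ∈ s.erase root := pruferLeaves_subset _ _ _ hℓ
    have hleaf : ∀ w ∈ s.erase root, p w ≠ ℓ := (mem_filter.mp hℓ).2
    have hps' : ∀ w ∈ s.erase ℓ, p w ∈ s.erase ℓ := by
      intro w hw
      refine mem_erase.mpr ⟨?_, hps w (mem_of_mem_erase hw)⟩
      by_cases hw0 : w = root
      · rw [hw0, hp.1]; exact (ne_of_mem_erase hℓs).symm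
      · exact hleaf w (mem_erase.mpr ⟨hw0, mem_of_mem_erase hw⟩)
    by_cases hs' : ((s.erase ℓ).erase root).Nonempty
    · have hrest := ih _ (erase_ssubset (mem_of_mem_erase hℓs)) hps' hs'
      cases hcode : pruferCode root p (s.erase ℓ) with
      | nil => simp [hcode] at hrest
      | cons b l => rw [List.getLast?_cons_cons, ← hcode]; exact hrest
    · have hnil : pruferCode root p (s.erase ℓ) = [] := by
        rw [← List.length_eq_zero_iff, hp.length_pruferCode, card_eq_zero]
        exact not_nonempty_iff_eq_empty.mp hs'
      have hpℓ : p ℓ = root := by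
        by_contra h
        exact hs' ⟨p ℓ, mem_erase.mpr
          ⟨h, mem_erase.mpr ⟨hleaf ℓ hℓs, hps ℓ (mem_of_mem_erase hℓs)⟩⟩⟩
      rw [hnil, List.getLast?_singleton, hpℓ]

theorem IsRootedTree.eqOn_of_pruferCode_eq (hp : IsRootedTree p root) (hq : IsRootedTree q root)
    (h : pruferCode root p s = pruferCode root q s) : Set.EqOn p q (s.erase root) := by
  induction s using Finset.strongInduction with
  | H s ih =>
    intro v hv
    have hl := hp.pruferLeaves_nonempty ⟨v, hv⟩
    -- the code determines the leaves, hence the first leaf removed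
    have hleaves : pruferLeaves root p s = pruferLeaves root q s := by
      rw [hp.pruferLeaves_eq, hq.pruferLeaves_eq, h]
    have hlq : (pruferLeaves root q s).Nonempty := hleaves ▸ hl
    have hmax : (pruferLeaves root q s).max' hlq = (pruferLeaves root p s).max' hl := by
      congr 1
      exact hleaves.symm
    rw [pruferCode_eq_cons hl, pruferCode_eq_cons hlq, hmax, List.cons.injEq] at h
    set ℓ := (pruferLeaves root p s).max' hl
    have hℓs : ℓ ∈ s := mem_of_mem_erase (pruferLeaves_subset _ _ _ (max'_mem _ hl))
    by_cases hvℓ : v = ℓ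
    · exact hvℓ ▸ h.1
    · exact ih _ (erase_ssubset hℓs) h.2 (mem_erase.mpr ⟨ne_of_mem_erase hv, mem_erase.mpr
        ⟨hvℓ, mem_of_mem_erase hv⟩⟩)

/-- Cayley's bound on the number of labelled trees. -/
theorem IsRootedTree.card_le [Fintype ι] :
    Fintype.card {p : ι → ι // IsRootedTree p root}
      ≤ Fintype.card ι ^ (Fintype.card ι - 2) := by
  -- the Prüfer code of a tree always ends with `root`, so dropping that entry loses nothing
  let code (p : {p : ι → ι // IsRootedTree p root}) : List.Vector ι (Fintype.card ι - 2) :=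
    ⟨(pruferCode root p.1 univ).dropLast, by
      rw [List.length_dropLast, p.2.length_pruferCode, card_erase_of_mem (mem_univ _), card_univ]
      omega⟩
  have hcode : Function.Injective code := by
    rintro ⟨p, hp⟩ ⟨q, hq⟩ h
    rw [Subtype.mk.injEq]
    funext v
    by_cases hv : v = root
    · rw [hv, hp.1, hq.1]
    have hne : (univ.erase root).Nonempty := ⟨v, mem_erase.mpr ⟨hv, mem_univ v⟩⟩
    have hlast (p) (hp : IsRootedTree p root) :=
      hp.getLast?_pruferCode (fun w _ => mem_univ (p w)) hne
    refine hp.eqOn_of_pruferCode_eq hq ?_ (mem_erase.mpr ⟨hv, mem_univ v⟩)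
    rw [← List.dropLast_append_getLast? root (hlast p hp),
      ← List.dropLast_append_getLast? root (hlast q hq)]
    exact congrArg (· ++ [root]) (congrArg Subtype.val h)
  simpa [card_vector] using Fintype.card_le_of_injective code hcode

end PruferCode

theorem SimpleGraph.Connected.exists_isRootedTree {V : Type*} {G : SimpleGraph V}
    (hG : G.Connected) (root : V) :
    ∃ p, IsRootedTree p root ∧ ∀ v ≠ root, G.Adj v (p v) := by
  classical
  have hstep (v) (hv : v ≠ root) : ∃ w, G.Adj v w ∧ G.dist w root < G.dist v root := by
    obtain ⟨q, hq⟩ := (hG.preconnected v root).exists_walk_length_eq_dist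
    cases q with
    | nil => exact absurd rfl hv
    | cons hadj q => exact ⟨_, hadj, hq ▸ (G.dist_le q).trans_lt (by simp)⟩
  choose w hw using hstep
  let p v := if h : v = root then root else w v h
  have hreach (n) : ∀ v, G.dist v root = n → ∃ k, p^[k] v = root := by
    induction n using Nat.strong_induction_on with
    | _ n ih =>
      intro v hn
      by_cases hv : v = root
      · exact ⟨0, hv⟩
      obtain ⟨k, hk⟩ := ih _ (hn ▸ (hw v hv).2) (w v hv) rfl
      exact ⟨k + 1, by rwa [iterate_succ_apply, show p v = w v hv from dif_neg hv]⟩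
  refine ⟨p, ⟨dif_pos rfl, fun v => hreach _ v rfl⟩, fun v hv => ?_⟩
  simpa [p, hv] using (hw v hv).1

theorem MeasureTheory.lmarginal_const {δ : Type*} {X : δ → Type*} [∀ i, MeasurableSpace (X i)]
    {μ : ∀ i, Measure (X i)} [∀ i, IsProbabilityMeasure (μ i)] [DecidableEq δ]
    (s : Finset δ) (c : ℝ≥0∞) : ∫⋯∫⁻_s, (fun _ => c) ∂μ = fun _ => c := by
  funext x
  simp [lmarginal]

section TreeEvents

variable {ι E : Type*} [MeasurableSpace E] {μ : Measure E} {W : Set (E × E)} {Q : ℝ≥0∞}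
  {p : ι → ι}

theorem measurable_prod_indicator_edges (hW : MeasurableSet W) (p : ι → ι) (t : Finset ι) :
    Measurable fun x : ι → E => ∏ v ∈ t, W.indicator (1 : E × E → ℝ≥0∞) (x v, x (p v)) :=
  Finset.measurable_prod _ fun v _ => (measurable_one.indicator hW).comp
    ((measurable_pi_apply v).prodMk (measurable_pi_apply (p v)))

theorem lintegral_prod_indicator_update_le [DecidableEq ι] (hW : MeasurableSet W)
    (hQ : ∀ z, μ ((·, z) ⁻¹' W) ≤ Q) {t : Finset ι} {ℓ : ι} (hℓ : ℓ ∈ t)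
    (hleaf : ∀ v ∈ t, p v ≠ ℓ) (x : ι → E) :
    ∫⁻ y, ∏ v ∈ t, W.indicator 1 (update x ℓ y v, update x ℓ y (p v)) ∂μ
      ≤ Q * ∏ v ∈ t.erase ℓ, W.indicator (1 : E × E → ℝ≥0∞) (x v, x (p v)) := by
  -- only the factor of the edge `ℓ → p ℓ` depends on the coordinate `ℓ`
  have hsplit (y : E) :
      ∏ v ∈ t, W.indicator 1 (update x ℓ y v, update x ℓ y (p v))
        = ((·, x (p ℓ)) ⁻¹' W).indicator 1 y
          * ∏ v ∈ t.erase ℓ, W.indicator (1 : E × E → ℝ≥0∞) (x v, x (p v)) := by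
    rw [← mul_prod_erase t _ hℓ, update_self, update_of_ne (hleaf ℓ hℓ)]
    congr 1
    refine prod_congr rfl fun v hv => ?_
    rw [update_of_ne (ne_of_mem_erase hv), update_of_ne (hleaf v (mem_of_mem_erase hv))]
  have hslice : MeasurableSet ((·, x (p ℓ)) ⁻¹' W) := measurable_prodMk_right hW
  simp_rw [hsplit]
  rw [lintegral_mul_const _ (measurable_one.indicator hslice), lintegral_indicator_one hslice]
  gcongr
  exact hQ _

theorem lmarginal_prod_indicator_le [DecidableEq ι] [SigmaFinite μ] (hW : MeasurableSet W)
    (hQ : ∀ z, μ ((·, z) ⁻¹' W) ≤ Q) (t : Finset ι) (ht : ∀ v ∈ t, ∃ k, p^[k] v ∉ t) :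
    ∫⋯∫⁻_t, (fun x => ∏ v ∈ t, W.indicator 1 (x v, x (p v))) ∂(fun _ => μ)
      ≤ fun _ => Q ^ #t := by
  induction t using Finset.strongInduction with
  | H t ih =>
    rcases t.eq_empty_or_nonempty with rfl | hne
    · simp
    obtain ⟨ℓ, hℓ, hleaf⟩ := hne.exists_forall_ne_of_forall_exists_iterate_notMem ht
    have ih' := ih _ (erase_ssubset hℓ) fun v hv =>
      (ht v (mem_of_mem_erase hv)).imp fun _ hk h => hk (mem_of_mem_erase h)
    rw [lmarginal_erase' _ (measurable_prod_indicator_edges hW p t) hℓ]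
    calc _ ≤ ∫⋯∫⁻_t.erase ℓ,
              (fun x => Q * ∏ v ∈ t.erase ℓ, W.indicator 1 (x v, x (p v))) ∂(fun _ => μ) :=
          lmarginal_mono fun x => lintegral_prod_indicator_update_le hW hQ hℓ hleaf x
      _ = fun x => Q * (∫⋯∫⁻_t.erase ℓ,
              (fun x => ∏ v ∈ t.erase ℓ, W.indicator 1 (x v, x (p v))) ∂(fun _ => μ)) x := by
          funext x
          exact lintegral_const_mul _
            ((measurable_prod_indicator_edges hW p _).comp measurable_updateFinset)
      _ ≤ fun _ => Q * Q ^ #(t.erase ℓ) := fun x => mul_le_mul_right (ih' x) Q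
      _ = fun _ => Q ^ #t := by rw [← pow_succ', card_erase_add_one hℓ]

theorem IsRootedTree.pi_setOf_edges_mem_le [Fintype ι] [IsProbabilityMeasure μ]
    (hW : MeasurableSet W) (hQ : ∀ z, μ ((·, z) ⁻¹' W) ≤ Q) {root : ι} (hp : IsRootedTree p root) :
    Measure.pi (fun _ : ι => μ) {x | ∀ v ≠ root, (x v, x (p v)) ∈ W}
      ≤ Q ^ (Fintype.card ι - 1) := by
  classical
  have hset : {x : ι → E | ∀ v ≠ root, (x v, x (p v)) ∈ W}
      = ⋂ v ∈ univ.erase root, {x | (x v, x (p v)) ∈ W} := by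
    ext
    simp
  have hmeas : MeasurableSet {x : ι → E | ∀ v ≠ root, (x v, x (p v)) ∈ W} :=
    hset ▸ Finset.measurableSet_biInter _ fun v _ =>
      hW.preimage ((measurable_pi_apply v).prodMk (measurable_pi_apply (p v)))
  have hcard : #(univ.erase root) = Fintype.card ι - 1 := by
    rw [card_erase_of_mem (mem_univ _), card_univ]
  calc _ = ∫⁻ x, ∏ v ∈ univ.erase root, W.indicator 1 (x v, x (p v))
          ∂Measure.pi fun _ : ι => μ := by
        rw [← lintegral_indicator_one hmeas, hset]
        congr 1 with x
        rw [← one_pow #(univ.erase root), ← prod_indicator_const_apply]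
        rfl
    _ ≤ ∫⁻ _, Q ^ (Fintype.card ι - 1) ∂Measure.pi fun _ : ι => μ := by
        refine lintegral_le_of_lmarginal_le (univ.erase root)
          (measurable_prod_indicator_edges hW p _) measurable_const ?_
        rw [lmarginal_const, ← hcard]
        exact lmarginal_prod_indicator_le hW hQ _ fun v _ =>
          (hp.2 v).imp fun _ hk => by rw [hk]; exact notMem_erase root _
    _ = Q ^ (Fintype.card ι - 1) := by simp

theorem pi_setOf_exists_isRootedTree_le [Fintype ι] [LinearOrder ι] [IsProbabilityMeasure μ]
    (hW : MeasurableSet W) (hQ : ∀ z, μ ((·, z) ⁻¹' W) ≤ Q) (root : ι) :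
    Measure.pi (fun _ : ι => μ) {x | ∃ p, IsRootedTree p root ∧ ∀ v ≠ root, (x v, x (p v)) ∈ W}
      ≤ (Fintype.card ι : ℝ≥0∞) ^ (Fintype.card ι - 2) * Q ^ (Fintype.card ι - 1) := by
  calc _ = Measure.pi (fun _ : ι => μ) (⋃ p : {p : ι → ι // IsRootedTree p root},
          {x | ∀ v ≠ root, (x v, x (p.1 v)) ∈ W}) := by
        congr 1
        ext
        simp
    _ ≤ ∑ p : {p : ι → ι // IsRootedTree p root}, Measure.pi (fun _ : ι => μ)
          {x | ∀ v ≠ root, (x v, x (p.1 v)) ∈ W} := measure_iUnion_fintype_le _ _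
    _ ≤ ∑ _p : {p : ι → ι // IsRootedTree p root}, Q ^ (Fintype.card ι - 1) :=
        sum_le_sum fun p _ => p.2.pi_setOf_edges_mem_le hW hQ
    _ ≤ _ := by
        rw [sum_const, card_univ, nsmul_eq_mul]
        gcongr
        exact_mod_cast IsRootedTree.card_le (root := root)

end TreeEvents

theorem withDensity_ofReal_ball_le {E : Type*} [NormedAddCommGroup E] [NormedSpace ℝ E]
    [MeasurableSpace E] [BorelSpace E] [FiniteDimensional ℝ E] (μ : Measure E)
    [μ.IsAddHaarMeasure] {f : E → ℝ} {M : ℝ} (hf : ∀ᵐ x ∂μ, f x ≤ M) (z : E) {r : ℝ}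
    (hr : 0 < r) :
    μ.withDensity (fun x => ENNReal.ofReal (f x)) (ball z r)
      ≤ ENNReal.ofReal (r ^ Module.finrank ℝ E * M * (μ (ball 0 1)).toReal) :=
  calc _ ≤ μ.withDensity (fun _ => ENNReal.ofReal M) (ball z r) :=
        Measure.le_iff'.1 (withDensity_mono (hf.mono fun x hx => ENNReal.ofReal_le_ofReal hx)) _
    _ = ENNReal.ofReal M * (ENNReal.ofReal (r ^ Module.finrank ℝ E) * μ (ball 0 1)) := by
        rw [withDensity_const, Measure.smul_apply, Measure.addHaar_ball_of_pos μ z hr, smul_eq_mul]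
    _ = _ := by
        rw [ENNReal.ofReal_mul' ENNReal.toReal_nonneg, ENNReal.ofReal_toReal measure_ball_lt_top.ne,
          ENNReal.ofReal_mul (by positivity)]
        ring

theorem geomGraph_adj {d i : ℕ} {r : ℝ} {x : Fin i → EuclideanSpace ℝ (Fin d)} {a b : Fin i} :
    (geomGraph r x).Adj a b ↔ a ≠ b ∧ dist (x a) (x b) < r := by
  simp [geomGraph, dist_comm]

theorem prob_geomGraph_connected_le_general (d i : ℕ) (hi : 1 ≤ i)
    {Ω : Type} [MeasurableSpace Ω] (P : Measure Ω) [IsProbabilityMeasure P]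
    (f : EuclideanSpace ℝ (Fin d) → ℝ) (hf : ∀ x, 0 ≤ f x)
    (Mf : ℝ) (hMf : ∀ᵐ x ∂(volume : Measure (EuclideanSpace ℝ (Fin d))), f x ≤ Mf)
    (X : Fin i → Ω → EuclideanSpace ℝ (Fin d))
    (hmeas : ∀ j, Measurable (X j))
    -- i.i.d. with common density `f`
    (hindep : iIndepFun X P)
    (hlaw : ∀ j, P.map (X j) = volume.withDensity (fun x => ENNReal.ofReal (f x)))
    (r : ℝ) (hr : 0 < r) :
    P {ω | (geomGraph r (fun j => X j ω)).Connected}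
      ≤ ENNReal.ofReal ((i : ℝ) ^ (i - 2) *
          (r ^ d * Mf * (volume (Metric.ball (0 : EuclideanSpace ℝ (Fin d)) 1)).toReal)
            ^ (i - 1)) := by
  have : NeZero i := ⟨by omega⟩
  have : IsProbabilityMeasure (volume.withDensity fun x => ENNReal.ofReal (f x)) :=
    hlaw 0 ▸ Measure.isProbabilityMeasure_map (hmeas 0).aemeasurable
  have hjoint : P.map (fun ω j => X j ω)
      = Measure.pi fun _ => volume.withDensity fun x => ENNReal.ofReal (f x) := by
    rw [← funext hlaw]
    exact (iIndepFun_iff_map_fun_eq_pi_map fun j => (hmeas j).aemeasurable).1 hindep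
  have hconn : {ω | (geomGraph r fun j => X j ω).Connected} ⊆ (fun ω j => X j ω) ⁻¹'
      {x | ∃ p, IsRootedTree p 0 ∧ ∀ v ≠ 0, (x v, x (p v)) ∈ {q | dist q.1 q.2 < r}} := by
    intro ω hω
    obtain ⟨p, hp, hadj⟩ := hω.exists_isRootedTree 0
    exact ⟨p, hp, fun v hv => (geomGraph_adj.1 (hadj v hv)).2⟩
  have hMf0 : 0 ≤ Mf := by
    obtain ⟨x, hx⟩ := hMf.exists
    exact (hf x).trans hx
  have hb : 0 ≤ r ^ d * Mf * (volume (ball (0 : EuclideanSpace ℝ (Fin d)) 1)).toReal := by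
    positivity
  calc _ ≤ P.map (fun ω j => X j ω) _ := (measure_mono hconn).trans
        (Measure.le_map_apply (aemeasurable_pi_lambda _ fun j => (hmeas j).aemeasurable) _)
    _ ≤ _ := hjoint ▸ pi_setOf_exists_isRootedTree_le
        (isOpen_lt continuous_dist continuous_const).measurableSet
        (fun z => withDensity_ofReal_ball_le volume hMf z hr) 0
    _ = _ := by
      rw [Fintype.card_fin, finrank_euclideanSpace_fin,
        ENNReal.ofReal_mul (by positivity : (0 : ℝ) ≤ (i : ℝ) ^ (i - 2)), ENNReal.ofReal_pow hb,
        ENNReal.ofReal_pow (Nat.cast_nonneg i), ENNReal.ofReal_natCast]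

/-- The probability that the geometric graph on `i` i.i.d. points with essentially bounded
density `f` and radius `r` is connected is at most `i^{i-2}·(r^d·‖f‖_∞·θ_d)^{i-1}`. -/
theorem prob_geomGraph_connected_le (d i : ℕ) (hd : 1 ≤ d) (hi : 1 ≤ i)
    {Ω : Type} [MeasurableSpace Ω] (P : Measure Ω) [IsProbabilityMeasure P]
    (f : EuclideanSpace ℝ (Fin d) → ℝ) (hf : ∀ x, 0 ≤ f x)
    (Mf : ℝ) (hMf : ∀ᵐ x ∂(volume : Measure (EuclideanSpace ℝ (Fin d))), f x ≤ Mf)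
    (X : Fin i → Ω → EuclideanSpace ℝ (Fin d))
    (hmeas : ∀ j, Measurable (X j))
    -- i.i.d. with common density `f`
    (hindep : iIndepFun X P)
    (hlaw : ∀ j, P.map (X j) = volume.withDensity (fun x => ENNReal.ofReal (f x)))
    (r : ℝ) (hr : 0 < r) :
    P {ω | (geomGraph r (fun j => X j ω)).Connected}
      ≤ ENNReal.ofReal ((i : ℝ) ^ (i - 2) *
          (r ^ d * Mf * (volume (Metric.ball (0 : EuclideanSpace ℝ (Fin d)) 1)).toReal)
            ^ (i - 1)) :=
  prob_geomGraph_connected_le_general d i hi P f hf Mf hMf X hmeas hindep hlaw r hr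
end

section
/- Let X₁,…,X_{i₁}, Y₁,…,Y_{i₂} be i.i.d. random points in ℝ^d with essentially bounded density f, and r > 0. Then the probability that the geometric graphs on {X₁,…,X_{i₁}} and on {Y₁,…,Y_{i₂}} with radius r are each connected AND the unions of balls ⋃_j B(X_j; r) and ⋃_j B(Y_j; r) intersect, is at most 2^d · i₁^{i₁−1} · i₂^{i₂−1} · (r^d‖f‖_∞ θ_d)^{i₁+i₂−1}. -/
open scoped Classical
open Metric MeasureTheory ProbabilityTheory
open scoped ENNReal

/-- Rooted trees on `V`, encoded by their parent map; the root is its own parent. -/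
@[ext]
structure ParentTree (V : Type*) where
  root : V
  parent : V → V
  parent_root : parent root = root
  exists_iterate_eq_root : ∀ k, ∃ m, parent^[m] k = root

namespace ParentTree

variable {V : Type*} (T : ParentTree V)

instance [Finite V] : Finite (ParentTree V) :=
  Finite.of_injective (fun T => (T.root, T.parent)) fun _ _ h =>
    ParentTree.ext (Prod.ext_iff.1 h).1 (Prod.ext_iff.1 h).2

theorem induction_on {motive : V → Prop} (root : motive T.root)
    (parent : ∀ k ≠ T.root, motive (T.parent k) → motive k) (k : V) : motive k := by
  obtain ⟨m, hm⟩ := T.exists_iterate_eq_root k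
  induction m generalizing k with
  | zero => exact (show k = T.root from hm) ▸ root
  | succ m ih =>
    by_cases hk : k = T.root
    · exact hk ▸ root
    · exact parent k hk (ih _ hm)

noncomputable def depth (k : V) : ℕ := Nat.find (T.exists_iterate_eq_root k)

theorem iterate_depth (k : V) : T.parent^[T.depth k] k = T.root :=
  Nat.find_spec (T.exists_iterate_eq_root k)

theorem depth_le {k : V} {m : ℕ} (h : T.parent^[m] k = T.root) : T.depth k ≤ m :=
  Nat.find_min' _ h

theorem depth_root : T.depth T.root = 0 :=
  Nat.le_zero.1 (T.depth_le rfl)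

theorem depth_parent_lt {k : V} (hk : k ≠ T.root) : T.depth (T.parent k) < T.depth k := by
  have hpos : 0 < T.depth k :=
    Nat.pos_of_ne_zero fun h => hk (by simpa [h] using T.iterate_depth k)
  have : T.parent^[T.depth k - 1] (T.parent k) = T.root := by
    rw [← Function.iterate_succ_apply, Nat.succ_eq_add_one, Nat.sub_add_cancel hpos,
      T.iterate_depth]
  exact (T.depth_le this).trans_lt (Nat.sub_lt hpos one_pos)

theorem iterate_injOn (k : V) :
    Set.InjOn (fun t => T.parent^[t] k) (Set.Iic (T.depth k)) := by
  have key : ∀ s t, s < t → t ≤ T.depth k → T.parent^[s] k ≠ T.parent^[t] k := by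
    intro s t hst ht heq
    have : T.parent^[T.depth k - t + s] k = T.root := by
      rw [Function.iterate_add_apply, heq, ← Function.iterate_add_apply,
        Nat.sub_add_cancel ht, T.iterate_depth]
    have := T.depth_le this
    omega
  intro s hs t ht heq
  rcases lt_trichotomy s t with h | h | h
  · exact absurd heq (key s t h ht)
  · exact h
  · exact absurd heq.symm (key t s h hs)

theorem exists_leaf [Finite V] [Nontrivial V] : ∃ ℓ ≠ T.root, ∀ k, T.parent k ≠ ℓ := by
  obtain ⟨ℓ, hℓ⟩ := Finite.exists_max T.depth
  obtain ⟨b, hb⟩ := exists_ne T.root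
  have hℓroot : ℓ ≠ T.root := fun h =>
    absurd ((T.depth_parent_lt hb).trans_le (hℓ b)) (by simp [h, T.depth_root])
  refine ⟨ℓ, hℓroot, fun k hk => ?_⟩
  have hkroot : k ≠ T.root := fun h => hℓroot (by rw [← hk, h, T.parent_root])
  exact absurd (hℓ k) (not_le.2 (hk ▸ T.depth_parent_lt hkroot))

def eraseLeaf (ℓ : V) (hroot : T.root ≠ ℓ) (hleaf : ∀ k, T.parent k ≠ ℓ) :
    ParentTree {k // k ≠ ℓ} where
  root := ⟨T.root, hroot⟩
  parent k := ⟨T.parent k, hleaf k⟩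
  parent_root := Subtype.ext T.parent_root
  exists_iterate_eq_root k := by
    obtain ⟨m, hm⟩ := T.exists_iterate_eq_root k
    have hval : Function.Semiconj Subtype.val
        (fun k : {k // k ≠ ℓ} => (⟨T.parent k, hleaf k⟩ : {k // k ≠ ℓ})) T.parent :=
      fun _ => rfl
    exact ⟨m, Subtype.ext ((hval.iterate_right m k).trans hm)⟩

noncomputable def graft {ι : Type*} (T' : ParentTree ι) : ParentTree (V ⊕ ι) where
  root := .inr T'.root
  parent := Sum.elim (fun j => if j = T.root then .inr T'.root else .inl (T.parent j))
    (fun j => .inr (T'.parent j))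
  parent_root := by simp [T'.parent_root]
  exists_iterate_eq_root := by
    rintro (j | j)
    · induction j using T.induction_on with
      | root => exact ⟨1, by simp⟩
      | parent j hj ih =>
        obtain ⟨m, hm⟩ := ih
        exact ⟨m + 1, by simpa [hj] using hm⟩
    · induction j using T'.induction_on with
      | root => exact ⟨0, rfl⟩
      | parent j _ ih =>
        obtain ⟨m, hm⟩ := ih
        exact ⟨m + 1, by simpa using hm⟩

section ShortEdges

variable {E : Type*} [PseudoMetricSpace E]

def shortEdges (ρ : V → ℝ) : Set (V → E) :=
  {x | ∀ k ≠ T.root, dist (x (T.parent k)) (x k) < ρ k}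

theorem measurableSet_shortEdges [MeasurableSpace E] [OpensMeasurableSpace E]
    [SecondCountableTopology E] [Countable V] (ρ : V → ℝ) :
    MeasurableSet (T.shortEdges (E := E) ρ) := by
  simp only [shortEdges, Set.ofPred_forall]
  exact .iInter fun k => .iInter fun _ => measurableSet_lt (by fun_prop) measurable_const

theorem mem_graft_shortEdges {ι : Type*} [DecidableEq V] [DecidableEq ι] (T' : ParentTree ι)
    {x : V ⊕ ι → E} {r s : ℝ} (h : (fun j => x (.inl j)) ∈ T.shortEdges fun _ => r)
    (h' : (fun j => x (.inr j)) ∈ T'.shortEdges fun _ => r)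
    (hroot : dist (x (.inr T'.root)) (x (.inl T.root)) < s) :
    x ∈ (T.graft T').shortEdges (Function.update (fun _ => r) (.inl T.root) s) := by
  rintro (j | j) hj
  · by_cases hjr : j = T.root
    · subst hjr
      simpa [graft] using hroot
    · simpa [graft, hjr] using h j hjr
  · have hjr : j ≠ T'.root := fun h => hj (congrArg Sum.inr h)
    simpa [graft] using h' j hjr

end ShortEdges

end ParentTree

theorem SimpleGraph.Connected.exists_parentTree {V : Type*} {G : SimpleGraph V}
    (h : G.Connected) (a : V) :
    ∃ T : ParentTree V, T.root = a ∧ ∀ k ≠ a, G.Adj (T.parent k) k := by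
  have step : ∀ k ≠ a, ∃ k', G.Adj k' k ∧ G.dist k' a < G.dist k a := by
    intro k hk
    obtain ⟨w, hw⟩ := (h.preconnected k a).exists_walk_length_eq_dist
    cases w with
    | nil => exact absurd rfl hk
    | cons hadj w' =>
      exact ⟨_, hadj.symm, (SimpleGraph.dist_le w').trans_lt (by simp at hw; omega)⟩
  choose! p hpadj hpdist using step
  let parent k := if k = a then a else p k
  have reach : ∀ n k, G.dist k a = n → ∃ m, parent^[m] k = a := by
    intro n
    induction n using Nat.strong_induction_on with
    | _ n ih =>
      intro k hn
      by_cases hk : k = a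
      · exact ⟨0, hk⟩
      · obtain ⟨m, hm⟩ := ih _ (hn ▸ hpdist k hk) (p k) rfl
        exact ⟨m + 1, by simpa [parent, hk] using hm⟩
  exact ⟨⟨a, parent, by simp [parent], fun k => reach _ k rfl⟩, rfl,
    fun k hk => by simpa [parent, hk] using hpadj k hk⟩

theorem Finset.prod_erase_update_const {ι M : Type*} [Fintype ι] [DecidableEq ι] [CommMonoid M]
    {a b : ι} (hab : a ≠ b) (c c' : M) :
    ∏ k ∈ univ.erase b, Function.update (fun _ => c) a c' k
      = c' * c ^ (Fintype.card ι - 2) := by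
  rw [Finset.prod_update_of_mem (by simpa using hab), Finset.prod_const,
    Finset.card_sdiff_of_subset (by simpa using hab), Finset.card_erase_of_mem (mem_univ _),
    Finset.card_univ, Finset.card_singleton, Nat.sub_sub]

section TreeEvents

variable {ι E : Type*} [Fintype ι] [DecidableEq ι] [MeasurableSpace E] [PseudoMetricSpace E]
  [OpensMeasurableSpace E] [SecondCountableTopology E] (ν : Measure E) [IsProbabilityMeasure ν]

theorem pi_restrict_mem_and_dist_lt_le {ℓ : ι} (c : {k // k ≠ ℓ})
    {B : Set ({k // k ≠ ℓ} → E)} (hB : MeasurableSet B) {ρ : ℝ} {C : ℝ≥0∞}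
    (hC : ∀ y, ν (ball y ρ) ≤ C) :
    Measure.pi (fun _ : ι => ν)
        {x | (fun k : {k // k ≠ ℓ} => x k) ∈ B ∧ dist (x c) (x ℓ) < ρ}
      ≤ C * Measure.pi (fun _ => ν) B := by
  let u : {k // ¬k ≠ ℓ} := ⟨ℓ, not_not.2 rfl⟩
  let S : Set (({k // k ≠ ℓ} → E) × ({k // ¬k ≠ ℓ} → E)) :=
    {y | y.1 ∈ B ∧ y.2 u ∈ ball (y.1 c) ρ}
  have hS : MeasurableSet S :=
    (measurable_fst hB).inter (measurableSet_lt (by fun_prop) (by fun_prop))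
  have hsection (y) : Measure.pi (fun _ => ν) (Prod.mk y ⁻¹' S)
      = B.indicator (fun y => ν (ball (y c) ρ)) y := by
    by_cases hy : y ∈ B
    · rw [Set.indicator_of_mem hy, ← (measurePreserving_eval (fun _ => ν) u).measure_preimage
        measurableSet_ball.nullMeasurableSet]
      congr 1
      ext w
      simp [S, hy]
    · simp [S, hy]
  calc Measure.pi (fun _ : ι => ν)
        {x | (fun k : {k // k ≠ ℓ} => x k) ∈ B ∧ dist (x c) (x ℓ) < ρ}
      = ((Measure.pi fun _ => ν).prod (Measure.pi fun _ => ν)) S := by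
        rw [← (measurePreserving_piEquivPiSubtypeProd (fun _ : ι => ν) (· ≠ ℓ)).measure_preimage
            hS.nullMeasurableSet]
        congr 1
        ext x
        simp [S, u, MeasurableEquiv.piEquivPiSubtypeProd, dist_comm]
    _ = ∫⁻ y, B.indicator (fun y => ν (ball (y c) ρ)) y ∂(Measure.pi fun _ => ν) := by
        rw [Measure.prod_apply hS]
        simp_rw [hsection]
    _ ≤ ∫⁻ y, B.indicator (fun _ => C) y ∂(Measure.pi fun _ => ν) :=
        lintegral_mono fun y => Set.indicator_le_indicator (hC _)
    _ = C * Measure.pi (fun _ => ν) B := lintegral_indicator_const hB C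

theorem ParentTree.pi_shortEdges_le (T : ParentTree ι) {ρ : ι → ℝ} {C : ι → ℝ≥0∞}
    (hC : ∀ k c, ν (ball c (ρ k)) ≤ C k) :
    Measure.pi (fun _ => ν) (T.shortEdges ρ) ≤ ∏ k ∈ Finset.univ.erase T.root, C k := by
  induction h : Fintype.card ι generalizing ι with
  | zero =>
    have : Nonempty ι := ⟨T.root⟩
    exact absurd h Fintype.card_ne_zero
  | succ n ih =>
    rcases subsingleton_or_nontrivial ι with hι | hι
    · have hunit : T.shortEdges (E := E) ρ = Set.univ :=
        Set.eq_univ_of_forall fun x k hk => absurd (Subsingleton.elim k T.root) hk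
      have hempty : Finset.univ.erase T.root = ∅ := Finset.eq_empty_of_forall_notMem
        fun k hk => (Finset.mem_erase.1 hk).1 (Subsingleton.elim _ _)
      simp [hunit, hempty]
    obtain ⟨ℓ, hℓ, hleaf⟩ := T.exists_leaf
    let T' := T.eraseLeaf ℓ hℓ.symm hleaf
    have hT : T.shortEdges ρ = {x : ι → E | (fun k : {k // k ≠ ℓ} => x k) ∈
        T'.shortEdges (fun k => ρ k) ∧ dist (x (T.parent ℓ)) (x ℓ) < ρ ℓ} := by
      ext x
      refine ⟨fun hx => ⟨fun k hk => hx k fun h => hk (Subtype.ext h), hx ℓ hℓ⟩, ?_⟩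
      rintro ⟨hrest, hℓx⟩ k hk
      by_cases hkℓ : k = ℓ
      · exact hkℓ ▸ hℓx
      · exact hrest ⟨k, hkℓ⟩ fun h => hk (congrArg Subtype.val h)
    have hprod : ∏ k ∈ Finset.univ.erase T'.root, C k
        = ∏ k ∈ (Finset.univ.erase T.root).erase ℓ, C k := by
      refine (Finset.prod_map _ (Function.Embedding.subtype _) C).symm.trans ?_
      congr 1
      ext k
      simp [T', eraseLeaf, and_comm]
    calc Measure.pi (fun _ => ν) (T.shortEdges ρ)
        ≤ C ℓ * Measure.pi (fun _ => ν) (T'.shortEdges (fun k => ρ k)) := by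
          rw [hT]
          exact pi_restrict_mem_and_dist_lt_le ν ⟨T.parent ℓ, hleaf ℓ⟩
            (T'.measurableSet_shortEdges _) (hC ℓ)
      _ ≤ C ℓ * ∏ k ∈ Finset.univ.erase T'.root, C k := by
          gcongr
          exact ih T' (fun k => hC k) (by simp [Fintype.card_subtype_compl, h])
      _ = ∏ k ∈ Finset.univ.erase T.root, C k := by
          rw [hprod, Finset.mul_prod_erase _ _ (by simpa using hℓ)]

theorem ParentTree.pi_graft_shortEdges_le {ι' : Type*} [Fintype ι'] [DecidableEq ι']
    (T : ParentTree ι) (T' : ParentTree ι') {r s : ℝ} {Cr Cs : ℝ≥0∞}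
    (hr : ∀ c, ν (ball c r) ≤ Cr) (hs : ∀ c, ν (ball c s) ≤ Cs) :
    Measure.pi (fun _ => ν)
        ((T.graft T').shortEdges (Function.update (fun _ => r) (.inl T.root) s))
      ≤ Cs * Cr ^ (Fintype.card ι + Fintype.card ι' - 2) := by
  refine ((T.graft T').pi_shortEdges_le ν (C := Function.update (fun _ => Cr) (.inl T.root) Cs)
    fun k c => ?_).trans_eq ?_
  · rcases eq_or_ne k (.inl T.root) with rfl | hk
    · simpa using hs c
    · simpa [hk] using hr c
  · exact (Finset.prod_erase_update_const Sum.inl_ne_inr _ _).trans (by rw [Fintype.card_sum])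

end TreeEvents

namespace ParentTree

section Joyal

variable {V : Type*} [LinearOrder V] (T : ParentTree V) (z : V)

noncomputable def spine : Finset V :=
  (Finset.range (T.depth z + 1)).image (T.parent^[·] z)

/-- Joyal's encoding of `T` relative to the vertex `z`: it sends the `t`-th smallest vertex of
the path `z = v₀ → v₁ → ⋯ → v_m = T.root` to `v_t` and agrees with `T.parent` off this path.
The path is recovered as the set of periodic points, and `z` is a fixed point when it is the
smallest vertex. -/
noncomputable def joyal (k : V) : V :=
  if k ∈ T.spine z then T.parent^[(T.spine z).sort.idxOf k] z else T.parent k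

variable {T z}

theorem mem_spine {k : V} : k ∈ T.spine z ↔ ∃ t ≤ T.depth z, T.parent^[t] z = k := by
  simp [spine]

theorem card_spine : (T.spine z).card = T.depth z + 1 := by
  rw [spine, Finset.card_image_of_injOn, Finset.card_range]
  exact (T.iterate_injOn z).mono fun t ht => by simpa [Nat.lt_succ_iff] using ht

theorem root_mem_spine : T.root ∈ T.spine z := mem_spine.2 ⟨_, le_rfl, T.iterate_depth z⟩

theorem joyal_of_notMem {k : V} (hk : k ∉ T.spine z) : T.joyal z k = T.parent k := if_neg hk

theorem joyal_of_mem {k : V} (hk : k ∈ T.spine z) :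
    T.joyal z k = T.parent^[(T.spine z).sort.idxOf k] z := if_pos hk

theorem idxOf_sort_spine_le {k : V} (hk : k ∈ T.spine z) :
    (T.spine z).sort.idxOf k ≤ T.depth z := by
  have := List.idxOf_lt_length_iff.2 ((Finset.mem_sort (· ≤ ·)).2 hk)
  rw [Finset.length_sort, card_spine] at this
  omega

theorem joyal_sort_getElem {t : ℕ} (ht : t < (T.spine z).sort.length) :
    T.joyal z (T.spine z).sort[t] = T.parent^[t] z := by
  rw [joyal_of_mem ((Finset.mem_sort (· ≤ ·)).1 (List.getElem_mem ht)),
    (Finset.sort_nodup _ (· ≤ ·)).idxOf_getElem]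

theorem mapsTo_joyal_spine : Set.MapsTo (T.joyal z) (T.spine z) (T.spine z) := fun k hk => by
  rw [Finset.mem_coe, joyal_of_mem hk]
  exact mem_spine.2 ⟨_, idxOf_sort_spine_le hk, rfl⟩

theorem injOn_joyal_spine : Set.InjOn (T.joyal z) (T.spine z) := fun k hk k' hk' h => by
  rw [joyal_of_mem hk, joyal_of_mem hk'] at h
  have := T.iterate_injOn z (idxOf_sort_spine_le hk) (idxOf_sort_spine_le hk') h
  exact (List.idxOf_inj ((Finset.mem_sort (· ≤ ·)).2 hk)).1 this

theorem exists_iterate_joyal_mem_spine (k : V) : ∃ s, (T.joyal z)^[s] k ∈ T.spine z := by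
  induction k using T.induction_on with
  | root => exact ⟨0, root_mem_spine⟩
  | parent k _ ih =>
    by_cases hk : k ∈ T.spine z
    · exact ⟨0, hk⟩
    · obtain ⟨s, hs⟩ := ih
      exact ⟨s + 1, by rwa [Function.iterate_succ_apply, joyal_of_notMem hk]⟩

theorem periodicPts_joyal : Function.periodicPts (T.joyal z) = T.spine z := by
  refine Set.Subset.antisymm (fun k hk => ?_) fun k hk => ?_
  · obtain ⟨n, hn, hper⟩ := Function.mem_periodicPts.1 hk
    obtain ⟨s, hs⟩ := exists_iterate_joyal_mem_spine (T := T) (z := z) k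
    have : (T.joyal z)^[n * s - s] ((T.joyal z)^[s] k) = k := by
      rw [← Function.iterate_add_apply, Nat.sub_add_cancel (Nat.le_mul_of_pos_left s hn)]
      exact (hper.mul_const s).eq
    exact this ▸ mapsTo_joyal_spine.iterate _ hs
  · have hinj := (mapsTo_joyal_spine (T := T) (z := z)).restrict_inj.2 injOn_joyal_spine
    exact Function.Semiconj.mapsTo_periodicPts (g := Subtype.val) (fb := T.joyal z)
      (fun _ => rfl) (hinj.mem_periodicPts ⟨k, hk⟩)

theorem joyal_self (hz : ∀ k, z ≤ k) : T.joyal z z = z := by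
  have hz_mem : z ∈ T.spine z := mem_spine.2 ⟨0, Nat.zero_le _, rfl⟩
  have hlen : 0 < (T.spine z).sort.length := by simp [card_spine]
  have : (T.spine z).sort[0] = z := by
    rw [Finset.sorted_zero_eq_min']
    exact le_antisymm (Finset.min'_le _ _ hz_mem) (hz _)
  simpa [this] using joyal_sort_getElem (T := T) hlen

theorem eq_of_joyal_eq {T T' : ParentTree V} (h : T.joyal z = T'.joyal z) : T = T' := by
  have hspine : T.spine z = T'.spine z := by
    rw [← Finset.coe_inj, ← periodicPts_joyal, ← periodicPts_joyal, h]
  have hdepth : T.depth z = T'.depth z := by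
    simpa [card_spine] using congrArg Finset.card hspine
  have hiter : ∀ t ≤ T.depth z, T.parent^[t] z = T'.parent^[t] z := fun t ht => by
    have hlen : t < (T.spine z).sort.length := by simp [card_spine]; omega
    have hsort : (T.spine z).sort = (T'.spine z).sort := by rw [hspine]
    rw [← joyal_sort_getElem hlen, h, List.getElem_of_eq hsort hlen, joyal_sort_getElem]
  have hroot : T.root = T'.root := by
    rw [← T.iterate_depth z, ← T'.iterate_depth z, hiter _ le_rfl, hdepth]
  refine ParentTree.ext hroot (funext fun k => ?_)
  by_cases hk : k ∈ T.spine z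
  · obtain ⟨t, ht, rfl⟩ := mem_spine.1 hk
    rcases ht.lt_or_eq with ht | rfl
    · rw [← Function.iterate_succ_apply' T.parent, hiter t ht.le, hiter (t + 1) ht,
        Function.iterate_succ_apply']
    · rw [T.iterate_depth, T.parent_root, hroot, T'.parent_root]
  · rw [← joyal_of_notMem hk, h, joyal_of_notMem (hspine ▸ hk)]

end Joyal

theorem natCard_le {V : Type*} [Finite V] :
    Nat.card (ParentTree V) ≤ Nat.card V ^ (Nat.card V - 1) := by
  rcases isEmpty_or_nonempty V with hV | hV
  · have : IsEmpty (ParentTree V) := ⟨fun T => hV.false T.root⟩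
    simp
  let : LinearOrder V := LinearOrder.lift' _ (Finite.equivFin V).injective
  obtain ⟨z, hz⟩ : ∃ z : V, ∀ k, z ≤ k := Finite.exists_min id
  have hinj : Function.Injective fun T : ParentTree V => fun k : {k // k ≠ z} => T.joyal z k := by
    intro T T' h
    refine eq_of_joyal_eq (z := z) (funext fun k => ?_)
    by_cases hk : k = z
    · rw [hk, joyal_self hz, joyal_self hz]
    · exact congrFun h ⟨k, hk⟩
  have := Fintype.ofFinite V
  calc Nat.card (ParentTree V) ≤ Nat.card ({k // k ≠ z} → V) :=
        Nat.card_le_card_of_injective _ hinj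
    _ = Nat.card V ^ (Nat.card V - 1) := by
      simp [Nat.card_eq_fintype_card, Fintype.card_subtype_compl]

end ParentTree

theorem measure_iUnion_parentTree_le {α V V' : Type*} [MeasurableSpace α] [Finite V] [Finite V']
    (μ : Measure α) {A : ParentTree V → ParentTree V' → Set α} {c : ℝ≥0∞}
    (h : ∀ T T', μ (A T T') ≤ c) :
    μ (⋃ (T) (T'), A T T')
      ≤ (Nat.card V ^ (Nat.card V - 1) : ℕ) *
          ((Nat.card V' ^ (Nat.card V' - 1) : ℕ) * c) := by
  calc μ (⋃ (T) (T'), A T T') ≤ ∑' (_ : ParentTree V) (_ : ParentTree V'), c :=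
        (measure_iUnion_le _).trans (ENNReal.tsum_le_tsum fun T =>
          (measure_iUnion_le _).trans (ENNReal.tsum_le_tsum (h T)))
    _ ≤ _ := by
      simp only [ENNReal.tsum_const, ENat.card_eq_coe_natCard]
      gcongr <;> exact_mod_cast ParentTree.natCard_le

theorem withDensity_ball_le {E : Type*} [NormedAddCommGroup E] [NormedSpace ℝ E]
    [MeasurableSpace E] [BorelSpace E] [FiniteDimensional ℝ E] (μ : Measure E)
    [μ.IsAddHaarMeasure] {f : E → ℝ} {M : ℝ} (hM : ∀ᵐ x ∂μ, f x ≤ M) (c : E)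
    {ρ : ℝ} (hρ : 0 < ρ) :
    μ.withDensity (fun x => ENNReal.ofReal (f x)) (ball c ρ)
      ≤ ENNReal.ofReal (ρ ^ Module.finrank ℝ E * M * (μ (ball 0 1)).toReal) := by
  rw [withDensity_apply _ measurableSet_ball]
  calc ∫⁻ x in ball c ρ, ENNReal.ofReal (f x) ∂μ
        ≤ ∫⁻ _ in ball c ρ, ENNReal.ofReal M ∂μ :=
        lintegral_mono_ae ((ae_restrict_of_ae hM).mono fun x hx => ENNReal.ofReal_le_ofReal hx)
    _ = ENNReal.ofReal (ρ ^ Module.finrank ℝ E * M * (μ (ball 0 1)).toReal) := by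
      rw [setLIntegral_const, μ.addHaar_ball_of_pos c hρ, mul_right_comm, mul_comm _ M,
        ENNReal.ofReal_mul' (by positivity), ENNReal.ofReal_mul (by positivity),
        ENNReal.ofReal_toReal measure_ball_lt_top.ne]

theorem geomGraph_adj_dist_lt {d i : ℕ} {r : ℝ} {x : Fin i → EuclideanSpace ℝ (Fin d)}
    {a b : Fin i} (h : (geomGraph r x).Adj a b) : dist (x a) (x b) < r := by
  rw [geomGraph, SimpleGraph.fromRel_adj] at h
  exact h.2.elim id fun h => dist_comm (x a) (x b) ▸ h

theorem exists_parentTree_mem_shortEdges {d i : ℕ} {r : ℝ}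
    {x : Fin i → EuclideanSpace ℝ (Fin d)} (h : (geomGraph r x).Connected) (a : Fin i) :
    ∃ T : ParentTree (Fin i), T.root = a ∧ x ∈ T.shortEdges fun _ => r := by
  obtain ⟨T, rfl, hT⟩ := h.exists_parentTree a
  exact ⟨T, rfl, fun k hk => geomGraph_adj_dist_lt (hT k hk)⟩

theorem subset_iUnion_graft_shortEdges {d i₁ i₂ : ℕ} (r : ℝ) :
    {x : Fin i₁ ⊕ Fin i₂ → EuclideanSpace ℝ (Fin d) |
      (geomGraph r fun j => x (.inl j)).Connected ∧
        (geomGraph r fun j => x (.inr j)).Connected ∧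
        ((⋃ j, ball (x (.inl j)) r) ∩ ⋃ j, ball (x (.inr j)) r).Nonempty} ⊆
      ⋃ (T : ParentTree (Fin i₁)) (T' : ParentTree (Fin i₂)),
        (T.graft T').shortEdges (Function.update (fun _ => r) (.inl T.root) (2 * r)) := by
  rintro x ⟨h, h', w, hw, hw'⟩
  obtain ⟨a, ha⟩ := Set.mem_iUnion.1 hw
  obtain ⟨a', ha'⟩ := Set.mem_iUnion.1 hw'
  obtain ⟨T, rfl, hT⟩ := exists_parentTree_mem_shortEdges h a
  obtain ⟨T', rfl, hT'⟩ := exists_parentTree_mem_shortEdges h' a'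
  refine Set.mem_iUnion₂.2 ⟨T, T', T.mem_graft_shortEdges T' hT hT' ?_⟩
  calc dist (x (.inr T'.root)) (x (.inl T.root))
      ≤ dist (x (.inr T'.root)) w + dist w (x (.inl T.root)) := dist_triangle _ _ _
    _ < r + r := add_lt_add (mem_ball'.1 ha') (mem_ball.1 ha)
    _ = 2 * r := by ring

theorem prob_two_components_le_general (d i₁ i₂ : ℕ) (hi₁ : 1 ≤ i₁) (hi₂ : 1 ≤ i₂)
    {Ω : Type} [MeasurableSpace Ω] (P : Measure Ω) [IsProbabilityMeasure P]
    (f : EuclideanSpace ℝ (Fin d) → ℝ) (hf : ∀ x, 0 ≤ f x)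
    (Mf : ℝ) (hMf : ∀ᵐ x ∂(volume : Measure (EuclideanSpace ℝ (Fin d))), f x ≤ Mf)
    (Z : Fin (i₁ + i₂) → Ω → EuclideanSpace ℝ (Fin d))
    (hmeas : ∀ j, Measurable (Z j))
    -- all `i₁ + i₂` points are i.i.d. with common density `f`
    (hindep : iIndepFun Z P)
    (hlaw : ∀ j, P.map (Z j) = volume.withDensity (fun x => ENNReal.ofReal (f x)))
    (r : ℝ) (hr : 0 < r) :
    P {ω | (geomGraph r (fun j : Fin i₁ => Z (Fin.castAdd i₂ j) ω)).Connected ∧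
           (geomGraph r (fun j : Fin i₂ => Z (Fin.natAdd i₁ j) ω)).Connected ∧
           ((⋃ j : Fin i₁, Metric.ball (Z (Fin.castAdd i₂ j) ω) r) ∩
             (⋃ j : Fin i₂, Metric.ball (Z (Fin.natAdd i₁ j) ω) r)).Nonempty}
      ≤ ENNReal.ofReal ((2 : ℝ) ^ d * (i₁ : ℝ) ^ (i₁ - 1) * (i₂ : ℝ) ^ (i₂ - 1) *
          (r ^ d * Mf * (volume (Metric.ball (0 : EuclideanSpace ℝ (Fin d)) 1)).toReal)
            ^ (i₁ + i₂ - 1)) := by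
  set ν := (volume : Measure (EuclideanSpace ℝ (Fin d))).withDensity
    fun x => ENNReal.ofReal (f x)
  set θ := (volume (ball (0 : EuclideanSpace ℝ (Fin d)) 1)).toReal
  have hMf₀ : 0 ≤ Mf := by
    obtain ⟨x, hx⟩ := hMf.exists
    exact (hf x).trans hx
  have : IsProbabilityMeasure ν :=
    hlaw ⟨0, by omega⟩ ▸ Measure.isProbabilityMeasure_map (hmeas _).aemeasurable
  let W : Ω → (Fin i₁ ⊕ Fin i₂ → EuclideanSpace ℝ (Fin d)) :=
    fun ω k => Z (finSumFinEquiv k) ω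
  have hlawW : P.map W = Measure.pi fun _ => ν := by
    rw [(hindep.precomp finSumFinEquiv.injective).map_fun_eq_pi_map
      fun k => (hmeas _).aemeasurable]
    simp_rw [hlaw]
  have hball {ρ : ℝ} (hρ : 0 < ρ) (c) :
      ν (ball c ρ) ≤ ENNReal.ofReal (ρ ^ d * Mf * θ) := by
    simpa using withDensity_ball_le volume hMf c hρ
  refine (measure_mono (t := W ⁻¹' _) fun ω hω =>
    Set.mem_preimage.2 (subset_iUnion_graft_shortEdges r (a := W ω) hω)).trans ?_
  rw [← Measure.map_apply (by fun_prop)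
    (.iUnion fun T => .iUnion fun T' => (T.graft T').measurableSet_shortEdges _), hlawW]
  refine (measure_iUnion_parentTree_le _ fun T T' =>
    T.pi_graft_shortEdges_le ν T' (hball hr) (hball (by positivity))).trans_eq ?_
  simp only [Nat.card_fin, Fintype.card_fin]
  rw [← ENNReal.ofReal_natCast, ← ENNReal.ofReal_natCast,
    ← ENNReal.ofReal_pow (by positivity), ← ENNReal.ofReal_mul (by positivity),
    ← ENNReal.ofReal_mul (by positivity), ← ENNReal.ofReal_mul (by positivity),
    show i₁ + i₂ - 1 = i₁ + i₂ - 2 + 1 by omega]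
  congr 1
  push_cast
  ring

/-- The probability that the geometric graphs on `{X₁,…,X_{i₁}}` and on `{Y₁,…,Y_{i₂}}` with
radius `r` are each connected and the unions `⋃ⱼ B(Xⱼ;r)` and `⋃ⱼ B(Yⱼ;r)` intersect is at
most `2^d · i₁^{i₁−1} · i₂^{i₂−1} · (r^d‖f‖_∞θ_d)^{i₁+i₂−1}`. -/
theorem prob_two_components_le (d i₁ i₂ : ℕ) (hd : 1 ≤ d) (hi₁ : 1 ≤ i₁) (hi₂ : 1 ≤ i₂)
    {Ω : Type} [MeasurableSpace Ω] (P : Measure Ω) [IsProbabilityMeasure P]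
    (f : EuclideanSpace ℝ (Fin d) → ℝ) (hf : ∀ x, 0 ≤ f x)
    (Mf : ℝ) (hMf : ∀ᵐ x ∂(volume : Measure (EuclideanSpace ℝ (Fin d))), f x ≤ Mf)
    (Z : Fin (i₁ + i₂) → Ω → EuclideanSpace ℝ (Fin d))
    (hmeas : ∀ j, Measurable (Z j))
    -- all `i₁ + i₂` points are i.i.d. with common density `f`
    (hindep : iIndepFun Z P)
    (hlaw : ∀ j, P.map (Z j) = volume.withDensity (fun x => ENNReal.ofReal (f x)))
    (r : ℝ) (hr : 0 < r) :
    P {ω | (geomGraph r (fun j : Fin i₁ => Z (Fin.castAdd i₂ j) ω)).Connected ∧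
           (geomGraph r (fun j : Fin i₂ => Z (Fin.natAdd i₁ j) ω)).Connected ∧
           ((⋃ j : Fin i₁, Metric.ball (Z (Fin.castAdd i₂ j) ω) r) ∩
             (⋃ j : Fin i₂, Metric.ball (Z (Fin.natAdd i₁ j) ω) r)).Nonempty}
      ≤ ENNReal.ofReal ((2 : ℝ) ^ d * (i₁ : ℝ) ^ (i₁ - 1) * (i₂ : ℝ) ^ (i₂ - 1) *
          (r ^ d * Mf * (volume (Metric.ball (0 : EuclideanSpace ℝ (Fin d)) 1)).toReal)
            ^ (i₁ + i₂ - 1)) :=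
  prob_two_components_le_general d i₁ i₂ hi₁ hi₂ P f hf Mf hMf Z hmeas hindep hlaw r hr
end
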